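/- arXiv:2506.14950 — 3 statements merged into one kernel-verified Lean document; each statement's English description precedes it below -/
import Mathlib

section
/- Failure of the validity condition for the standard two-stage CMR score (part of Proposition 1): Suppose Y and F are square-integrable real random variables on (Ω, 𝓕, μ) satisfying the conditional moment restriction μ[Y − F | m] = 0 μ-almost everywhere. Then μ[F | m] = μ[Y | m] μ-almost everywhere, and consequently ∫ (Y − μ[F|m])² dμ = ∫ (Y − μ[Y|m])² dμ. In particular, if ∫ (Y − μ[Y|m])² dμ > 0 (the outcome has nondegenerate noise given C), then the expected standard score at the true functions, ∫ (Y − g₀)² dμ with g₀ := μ[F|m], is strictly positive, so the basic requirement E[ψ] = 0 of Neyman orthogonality fails for the standard score ℓ = (Y − g(f,C))². -/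
open MeasureTheory

theorem condExp_eq_of_condExp_sub_eq_zero {Ω : Type*} {m m₀ : MeasurableSpace Ω}
    {μ : Measure Ω} {f g : Ω → ℝ} (hf : Integrable f μ) (hg : Integrable g μ)
    (hfg : μ[f - g|m] =ᵐ[μ] 0) : μ[g|m] =ᵐ[μ] μ[f|m] := by
  filter_upwards [condExp_sub hf hg m, hfg] with ω hsub hzero
  have : (μ[f|m]) ω - (μ[g|m]) ω = 0 := by simpa [hzero] using hsub.symm
  linarith

theorem standard_score_not_valid_general
    {Ω : Type*} {m 𝓕 : MeasurableSpace Ω}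
    {μ : Measure Ω} [IsProbabilityMeasure μ]
    (Y F : Ω → ℝ) (hY : MemLp Y 2 μ) (hF : MemLp F 2 μ)
    (hCMR : μ[Y - F|m] =ᵐ[μ] 0) :
    (μ[F|m] =ᵐ[μ] μ[Y|m]) ∧
    (∫ ω, (Y ω - (μ[F|m]) ω) ^ 2 ∂μ = ∫ ω, (Y ω - (μ[Y|m]) ω) ^ 2 ∂μ) ∧
    (0 < ∫ ω, (Y ω - (μ[Y|m]) ω) ^ 2 ∂μ →
      0 < ∫ ω, (Y ω - (μ[F|m]) ω) ^ 2 ∂μ) := by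
  have hcond : μ[F|m] =ᵐ[μ] μ[Y|m] :=
    condExp_eq_of_condExp_sub_eq_zero (hY.integrable one_le_two) (hF.integrable one_le_two) hCMR
  have hscore : ∫ ω, (Y ω - (μ[F|m]) ω) ^ 2 ∂μ = ∫ ω, (Y ω - (μ[Y|m]) ω) ^ 2 ∂μ :=
    integral_congr_ae (hcond.mono fun ω h => by simp only [h])
  exact ⟨hcond, hscore, fun h => hscore ▸ h⟩

/-- Failure of the validity condition for the standard two-stage CMR score:
under the conditional moment restriction `μ[Y - F | m] = 0` a.e., one has
`μ[F|m] = μ[Y|m]` a.e., hence `∫ (Y - μ[F|m])² dμ = ∫ (Y - μ[Y|m])² dμ`; in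
particular, if the latter is strictly positive then so is the expected
standard score at the true functions. -/
theorem standard_score_not_valid
    {Ω : Type*} {m 𝓕 : MeasurableSpace Ω} (hm : m ≤ 𝓕)
    {μ : Measure Ω} [IsProbabilityMeasure μ]
    (Y F : Ω → ℝ) (hY : MemLp Y 2 μ) (hF : MemLp F 2 μ)
    (hCMR : μ[Y - F|m] =ᵐ[μ] 0) :
    (μ[F|m] =ᵐ[μ] μ[Y|m]) ∧
    (∫ ω, (Y ω - (μ[F|m]) ω) ^ 2 ∂μ = ∫ ω, (Y ω - (μ[Y|m]) ω) ^ 2 ∂μ) ∧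
    (0 < ∫ ω, (Y ω - (μ[Y|m]) ω) ^ 2 ∂μ →
      0 < ∫ ω, (Y ω - (μ[F|m]) ω) ^ 2 ∂μ) :=
  standard_score_not_valid_general (𝓕 := 𝓕) Y F hY hF hCMR
end

section
/- Bounded ill-posedness from the DML identification condition (Proposition 6): Let d, k ∈ ℕ, let Θ ⊆ ℝ^d with θ₀ ∈ Θ, and for each θ ∈ Θ let F_θ be a square-integrable real random variable on (Ω, 𝓕, μ) (representing f_θ(X)). Assume: (i) pointwise Lipschitz parameterisation: there is L > 0 with |F_θ(ω) − F_{θ₀}(ω)| ≤ L·‖θ − θ₀‖ for all ω ∈ Ω and all θ ∈ Θ; (ii) there is a linear map J₀ : ℝ^d → ℝ^k and a constant c₀ > 0 with ‖J₀ v‖ ≥ c₀·‖v‖ for all v ∈ ℝ^d (smallest singular value of J₀ bounded below by c₀); (iii) identification: for every θ ∈ Θ, 2·∫ (μ[F_{θ₀} − F_θ | m])² dμ ≥ ‖J₀(θ − θ₀)‖. Then for every θ ∈ Θ with ‖θ − θ₀‖ ≤ 1, ∫ (F_{θ₀} − F_θ)² dμ ≤ (2L²/c₀)·∫ (μ[F_{θ₀}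 − F_θ | m])² dμ; equivalently, the ill-posedness ratio ‖F_{θ₀} − F_θ‖₂ / ‖μ[F_{θ₀} − F_θ | m]‖₂ is bounded by √2·L/√c₀. -/
open MeasureTheory

theorem integral_sq_le_of_ae_abs_le {Ω : Type*} [MeasurableSpace Ω] {μ : Measure Ω}
    [IsProbabilityMeasure μ] {f : Ω → ℝ} {C : ℝ} (hf : ∀ᵐ ω ∂μ, |f ω| ≤ C) :
    ∫ ω, f ω ^ 2 ∂μ ≤ C ^ 2 := by
  calc ∫ ω, f ω ^ 2 ∂μ ≤ ∫ _ω, C ^ 2 ∂μ :=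
        integral_mono_of_nonneg (.of_forall fun ω => sq_nonneg (f ω)) (integrable_const _)
          (hf.mono fun ω hω => sq_le_sq' (abs_le.mp hω).1 (abs_le.mp hω).2)
    _ = C ^ 2 := by simp

theorem bounded_ill_posedness_of_dml_identification_general
    {Ω : Type*} {m 𝓕 : MeasurableSpace Ω}
    {μ : Measure Ω} [IsProbabilityMeasure μ]
    (d k : ℕ) (Θ : Set (EuclideanSpace ℝ (Fin d)))
    (θ₀ : EuclideanSpace ℝ (Fin d))
    (F : EuclideanSpace ℝ (Fin d) → Ω → ℝ)
    (L : ℝ)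
    (hLip : ∀ θ ∈ Θ, ∀ ω : Ω, |F θ ω - F θ₀ ω| ≤ L * ‖θ - θ₀‖)
    (J₀ : EuclideanSpace ℝ (Fin d) →ₗ[ℝ] EuclideanSpace ℝ (Fin k))
    (c₀ : ℝ) (hc₀ : 0 < c₀) (hJ : ∀ v, c₀ * ‖v‖ ≤ ‖J₀ v‖)
    (hid : ∀ θ ∈ Θ,
      ‖J₀ (θ - θ₀)‖ ≤ 2 * ∫ ω, ((μ[fun ω' => F θ₀ ω' - F θ ω'|m]) ω) ^ 2 ∂μ) :
    ∀ θ ∈ Θ, ‖θ - θ₀‖ ≤ 1 →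
      ∫ ω, (F θ₀ ω - F θ ω) ^ 2 ∂μ ≤
        (2 * L ^ 2 / c₀) *
          ∫ ω, ((μ[fun ω' => F θ₀ ω' - F θ ω'|m]) ω) ^ 2 ∂μ := by
  intro θ hθ hθ_le_one
  set I := ∫ ω, ((μ[fun ω' => F θ₀ ω' - F θ ω'|m]) ω) ^ 2 ∂μ
  have hdist : ‖θ - θ₀‖ ≤ 2 * I / c₀ := by
    rw [le_div_iff₀' hc₀]
    exact (hJ _).trans (hid θ hθ)
  calc ∫ ω, (F θ₀ ω - F θ ω) ^ 2 ∂μ ≤ (L * ‖θ - θ₀‖) ^ 2 :=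
        integral_sq_le_of_ae_abs_le <| .of_forall fun ω => abs_sub_comm (F θ ω) (F θ₀ ω) ▸ hLip θ hθ ω
    _ ≤ L ^ 2 * ‖θ - θ₀‖ := by
        rw [mul_pow]
        gcongr
        exact pow_le_of_le_one (norm_nonneg _) hθ_le_one two_ne_zero
    _ ≤ L ^ 2 * (2 * I / c₀) := by gcongr
    _ = 2 * L ^ 2 / c₀ * I := by ring

/-- Bounded ill-posedness from the DML identification condition
(Proposition 6): under a pointwise Lipschitz parameterisation, a lower
singular-value bound on `J₀`, and the identification condition
`2 ∫ (μ[F θ₀ - F θ | m])² dμ ≥ ‖J₀ (θ - θ₀)‖`, we get for every `θ ∈ Θ` with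
`‖θ - θ₀‖ ≤ 1` that
`∫ (F θ₀ - F θ)² dμ ≤ (2 L² / c₀) ∫ (μ[F θ₀ - F θ | m])² dμ`. -/
theorem bounded_ill_posedness_of_dml_identification
    {Ω : Type*} {m 𝓕 : MeasurableSpace Ω} (hm : m ≤ 𝓕)
    {μ : Measure Ω} [IsProbabilityMeasure μ]
    (d k : ℕ) (Θ : Set (EuclideanSpace ℝ (Fin d)))
    (θ₀ : EuclideanSpace ℝ (Fin d)) (hθ₀ : θ₀ ∈ Θ)
    (F : EuclideanSpace ℝ (Fin d) → Ω → ℝ) (hF : ∀ θ ∈ Θ, MemLp (F θ) 2 μ)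
    (L : ℝ) (hL : 0 < L)
    (hLip : ∀ θ ∈ Θ, ∀ ω : Ω, |F θ ω - F θ₀ ω| ≤ L * ‖θ - θ₀‖)
    (J₀ : EuclideanSpace ℝ (Fin d) →ₗ[ℝ] EuclideanSpace ℝ (Fin k))
    (c₀ : ℝ) (hc₀ : 0 < c₀) (hJ : ∀ v, c₀ * ‖v‖ ≤ ‖J₀ v‖)
    (hid : ∀ θ ∈ Θ,
      ‖J₀ (θ - θ₀)‖ ≤ 2 * ∫ ω, ((μ[fun ω' => F θ₀ ω' - F θ ω'|m]) ω) ^ 2 ∂μ) :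
    ∀ θ ∈ Θ, ‖θ - θ₀‖ ≤ 1 →
      ∫ ω, (F θ₀ ω - F θ ω) ^ 2 ∂μ ≤
        (2 * L ^ 2 / c₀) *
          ∫ ω, ((μ[fun ω' => F θ₀ ω' - F θ ω'|m]) ω) ^ 2 ∂μ :=
  bounded_ill_posedness_of_dml_identification_general (𝓕 := 𝓕) d k Θ θ₀ F L hLip J₀ c₀ hc₀ hJ hid
end

section
/- Deterministic core of the constrained-ERM estimation-error theorem: Let V be a real normed space, let A, B : V → ℝ (population risk and empirical risk), let h₀, h*, ĥ ∈ V, and let λ > 0 and κ, δ ≥ 0. Assume: (i) B(ĥ) ≤ B(h*) (ĥ empirically outperforms h*); (ii) curvature: A(ĥ) − A(h₀) ≥ (λ/2)·‖ĥ − h₀‖²; (iii) A(h₀) ≤ A(h*); (iv) uniform deviation at ĥ: |(A(ĥ) − A(h₀)) − (B(ĥ) − B(h₀))| ≤ κ·(‖ĥ − h₀‖ + δ); and (v) uniform deviation at h*: |(A(h*) − A(h₀)) − (B(h*) − B(h₀))| ≤ κ·(‖h* − h₀‖ + δ). Then ‖ĥ − h₀‖² ≤ (4/λ)·(A(h*)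 − A(h₀)) + (4/λ²)·κ² + (4κ/λ)·(‖h* − h₀‖ + 2δ). -/
/-- Deterministic core of the constrained-ERM estimation-error theorem:
if the ERM solution `ĥ` empirically outperforms `h*`, the population risk has
`λ`-curvature at `h₀`, `h₀` is a population minimiser relative to `h*`, and
the uniform deviation bounds hold at `ĥ` and `h*`, then
`‖ĥ - h₀‖² ≤ (4/λ)(A h* - A h₀) + (4/λ²) κ² + (4κ/λ)(‖h* - h₀‖ + 2δ)`. -/
theorem constrained_erm_deterministic_core
    {V : Type*} [NormedAddCommGroup V]
    (A B : V → ℝ) (h₀ hstar hhat : V) (lam κ δ : ℝ)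
    (hlam : 0 < lam) (hκ : 0 ≤ κ) (hδ : 0 ≤ δ)
    (h1 : B hhat ≤ B hstar)
    (h2 : lam / 2 * ‖hhat - h₀‖ ^ 2 ≤ A hhat - A h₀)
    (h3 : A h₀ ≤ A hstar)
    (h4 : |(A hhat - A h₀) - (B hhat - B h₀)| ≤ κ * (‖hhat - h₀‖ + δ))
    (h5 : |(A hstar - A h₀) - (B hstar - B h₀)| ≤ κ * (‖hstar - h₀‖ + δ)) :
    ‖hhat - h₀‖ ^ 2 ≤ 4 / lam * (A hstar - A h₀) + 4 / lam ^ 2 * κ ^ 2 +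
      4 * κ / lam * (‖hstar - h₀‖ + 2 * δ) := by
  set r := ‖hhat - h₀‖ with hr
  set s := ‖hstar - h₀‖ with hs
  have hr0 : 0 ≤ r := norm_nonneg _
  obtain ⟨h4a, h4b⟩ := abs_le.mp h4
  obtain ⟨h5a, h5b⟩ := abs_le.mp h5
  -- key: lam/2 * r^2 ≤ (A hstar - A h₀) + κ*(s+δ) + κ*(r+δ)
  have key : lam / 2 * r ^ 2 ≤ (A hstar - A h₀) + κ * (s + δ) + κ * (r + δ) := by
    nlinarith
  have hl2 : 0 < lam ^ 2 := by positivity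
  -- (r - κ/lam)^2 ≥ 0, r^2 ≤ 2*(r - κ/lam)^2 + 2*(κ/lam)^2
  have sq1 : 0 ≤ (r - 2 * κ / lam) ^ 2 := sq_nonneg _
  have hE : 0 ≤ A hstar - A h₀ := by linarith
  have goal' : lam ^ 2 * r ^ 2 ≤ lam ^ 2 * (4 / lam * (A hstar - A h₀) + 4 / lam ^ 2 * κ ^ 2 +
      4 * κ / lam * (s + 2 * δ)) := by
    have : lam ^ 2 * (4 / lam * (A hstar - A h₀) + 4 / lam ^ 2 * κ ^ 2 +
        4 * κ / lam * (s + 2 * δ)) =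
        4 * lam * (A hstar - A h₀) + 4 * κ ^ 2 + 4 * κ * lam * (s + 2 * δ) := by
      field_simp
    rw [this]
    nlinarith [sq_nonneg (lam * r - 2 * κ)]
  exact le_of_mul_le_mul_left (by linarith [goal']) hl2
end
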